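/- arXiv:1207.7160 — 3 statements merged into one kernel-verified Lean document; each statement's English description precedes it below -/
import Mathlib

section
/- Let x* be a global minimizer of g(x) = ‖x − x̂‖² subject to quadratic equality constraints f_k(x) = 0. If there exist λ_k ∈ ℝ with (i) ∇g(x*) + ∑ λ_k ∇f_k(x*) = 0 and (ii) I + ∑ λ_k H_k ⪰ 0, then the semidefinite relaxation is exact: the optimal value of the SDP min ⟨G, Y⟩ subject to ⟨F_k, Y⟩ = 0, ⟨E, Y⟩ = 1, Y ⪰ 0 equals g(x*). -/
/-!
Lifting `x*` to `(x*, 1)` gives a feasible rank-one `Y` with objective value `g x*`.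
Conversely, the Lagrangian matrix `G + ∑ λₖ Fₖ` homogenizes the quadratic `g + ∑ λₖ fₖ`, which
by (i) is stationary at `x*` and by feasibility takes the value `g x*` there. Hence it equals
`g x* • E` plus the homogenization of `(x - x*)ᵀ (I + ∑ λₖ Hₖ) (x - x*)`, which is positive
semidefinite by (ii). Pairing with any feasible `Y` then gives `⟨G, Y⟩ ≥ g x*`.
-/

open Matrix

namespace Matrix

variable {ι κ R : Type*}

section Trace

variable [Fintype ι]

lemma trace_mul_vecMulVec [CommSemiring R] (M : Matrix ι ι R) (v w : ι → R) :
    trace (M * vecMulVec v w) = w ⬝ᵥ M *ᵥ v := by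
  rw [mul_vecMulVec, trace_vecMulVec, dotProduct_comm]

lemma trace_add_sum_smul_mul [CommSemiring R] [Fintype κ] (G Y : Matrix ι ι R)
    (F : κ → Matrix ι ι R) (lam : κ → R) :
    trace ((G + ∑ k, lam k • F k) * Y) = trace (G * Y) + ∑ k, lam k * trace (F k * Y) := by
  simp only [add_mul, Finset.sum_mul, trace_add, trace_sum, smul_mul, trace_smul, smul_eq_mul]

open scoped ComplexOrder in
lemma PosSemidef.trace_mul_nonneg {𝕜 : Type*} [RCLike 𝕜] {M Y : Matrix ι ι 𝕜}
    (hM : M.PosSemidef) (hY : Y.PosSemidef) : 0 ≤ trace (M * Y) := by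
  obtain ⟨r, v, rfl⟩ := posSemidef_iff_eq_sum_vecMulVec.mp hY
  rw [Matrix.mul_sum, trace_sum]
  exact Finset.sum_nonneg fun i _ ↦
    (trace_mul_vecMulVec M _ _).symm ▸ hM.dotProduct_mulVec_nonneg _

/-- Weak duality for the semidefinite program `min ⟨G, Y⟩` subject to `⟨Fₖ, Y⟩ = 0`,
`⟨E, Y⟩ = 1`, `Y ⪰ 0`. -/
lemma le_trace_mul_of_add_sum_smul_eq [Fintype κ] {G E P Y : Matrix ι ι ℝ}
    {F : κ → Matrix ι ι ℝ} {lam : κ → ℝ} {d : ℝ} (hP : P.PosSemidef)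
    (hL : G + ∑ k, lam k • F k = P + d • E) (hY : Y.PosSemidef)
    (hFY : ∀ k, trace (F k * Y) = 0) (hEY : trace (E * Y) = 1) :
    d ≤ trace (G * Y) := by
  have h := congrArg (fun N ↦ trace (N * Y)) hL
  simp only [trace_add_sum_smul_mul, hFY, mul_zero, Finset.sum_const_zero, add_zero] at h
  rw [add_mul, trace_add, smul_mul, trace_smul, hEY, smul_eq_mul, mul_one] at h
  linarith [hP.trace_mul_nonneg hY]

end Trace

section Homogenize

variable [CommRing R]

/-- The matrix `[[A, b], [bᵀ, c]]` of `x ↦ xᵀ A x + 2 bᵀ x + c` in the coordinates `(x, 1)`. -/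
def homogenize (A : Matrix ι ι R) (b : ι → R) (c : R) : Matrix (ι ⊕ Unit) (ι ⊕ Unit) R :=
  fromBlocks A (replicateCol Unit b) (replicateRow Unit b) (of fun _ _ ↦ c)

lemma homogenize_add (A A' : Matrix ι ι R) (b b' : ι → R) (c c' : R) :
    homogenize A b c + homogenize A' b' c' = homogenize (A + A') (b + b') (c + c') := by
  ext (i | i) (j | j) <;> simp [homogenize]

lemma smul_homogenize (r : R) (A : Matrix ι ι R) (b : ι → R) (c : R) :
    r • homogenize A b c = homogenize (r • A) (r • b) (r * c) := by
  ext (i | i) (j | j) <;> simp [homogenize]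

lemma homogenize_sum (s : Finset κ) (A : κ → Matrix ι ι R) (b : κ → ι → R) (c : κ → R) :
    ∑ k ∈ s, homogenize (A k) (b k) (c k) =
      homogenize (∑ k ∈ s, A k) (∑ k ∈ s, b k) (∑ k ∈ s, c k) := by
  ext (i | i) (j | j) <;> simp [homogenize, Matrix.sum_apply, Finset.sum_apply]

variable [Fintype ι]

lemma dotProduct_homogenize_mulVec (A : Matrix ι ι R) (b : ι → R) (c : R) (x : ι → R) :
    Sum.elim x 1 ⬝ᵥ homogenize A b c *ᵥ Sum.elim x 1 = x ⬝ᵥ A *ᵥ x + 2 * (b ⬝ᵥ x) + c := by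
  have hb : replicateCol Unit b *ᵥ 1 = b := by ext; simp [mulVec]
  have hc : (of fun _ _ ↦ c : Matrix Unit Unit R) *ᵥ 1 = fun _ ↦ c := by ext; simp [mulVec]
  simp only [homogenize, fromBlocks_mulVec, Sum.elim_comp_inl, Sum.elim_comp_inr,
    sumElim_dotProduct_sumElim, replicateRow_mulVec_eq_const, hb, hc, dotProduct_add,
    dotProduct_comm x b, dotProduct_pUnit, Pi.one_apply, Function.const_apply, one_mul]
  ring

lemma dotProduct_homogenize_one_mulVec [DecidableEq ι] (xhat x : ι → R) :
    Sum.elim x 1 ⬝ᵥ homogenize 1 (-xhat) (xhat ⬝ᵥ xhat) *ᵥ Sum.elim x 1 =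
      (x - xhat) ⬝ᵥ (x - xhat) := by
  rw [dotProduct_homogenize_mulVec]
  simp only [sub_dotProduct, dotProduct_sub, one_mulVec, neg_dotProduct, dotProduct_comm xhat x]
  ring

/-- Taylor expansion of a quadratic function at a stationary point `x`. -/
lemma homogenize_of_stationary {A : Matrix ι ι R} {b x : ι → R} (c : R)
    (hx : A *ᵥ x + b = 0) :
    homogenize A b c = homogenize A (-(A *ᵥ x)) (x ⬝ᵥ A *ᵥ x) +
      (Sum.elim x 1 ⬝ᵥ homogenize A b c *ᵥ Sum.elim x 1) • homogenize 0 0 1 := by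
  obtain rfl : b = -(A *ᵥ x) := eq_neg_of_add_eq_zero_right hx
  rw [dotProduct_homogenize_mulVec, smul_homogenize, homogenize_add]
  congr 1
  · simp
  · simp
  · rw [neg_dotProduct, dotProduct_comm]
    ring

lemma homogenize_shift_eq [DecidableEq ι] {A : Matrix ι ι R} (hA : A.IsSymm) (v : ι → R) :
    homogenize A (-(A *ᵥ v)) (v ⬝ᵥ A *ᵥ v) =
      (fromCols 1 (replicateCol Unit (-v)))ᵀ * A * fromCols 1 (replicateCol Unit (-v)) := by
  ext (i | i) (j | j) <;>
    simp [homogenize, mul_apply, fromCols, one_apply, mulVec, dotProduct, hA.apply, mul_comm]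

lemma PosSemidef.homogenize_shift [DecidableEq ι] [PartialOrder R] [StarRing R] [TrivialStar R]
    [StarOrderedRing R] {A : Matrix ι ι R} (hA : A.PosSemidef) (v : ι → R) :
    (homogenize A (-(A *ᵥ v)) (v ⬝ᵥ A *ᵥ v)).PosSemidef := by
  have hsymm : A.IsSymm := (conjTranspose_eq_transpose_of_trivial A).symm.trans hA.1
  rw [homogenize_shift_eq hsymm, ← conjTranspose_eq_transpose_of_trivial]
  exact hA.conjTranspose_mul_mul_same _

end Homogenize

end Matrix

theorem sdp_relaxation_exact_of_certificate_general
    (n m : ℕ) (xhat : Fin n → ℝ)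
    (H : Fin m → Matrix (Fin n) (Fin n) ℝ)
    (b : Fin m → Fin n → ℝ) (β : Fin m → ℝ)
    (g : (Fin n → ℝ) → ℝ) (f : Fin m → (Fin n → ℝ) → ℝ)
    (hg : ∀ x, g x = (x - xhat) ⬝ᵥ (x - xhat))
    (hf : ∀ k x, f k x = x ⬝ᵥ (H k).mulVec x + 2 * (b k ⬝ᵥ x) + β k)
    (G : Matrix (Fin n ⊕ Unit) (Fin n ⊕ Unit) ℝ)
    (F : Fin m → Matrix (Fin n ⊕ Unit) (Fin n ⊕ Unit) ℝ)
    (E : Matrix (Fin n ⊕ Unit) (Fin n ⊕ Unit) ℝ)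
    (hG : G = Matrix.fromBlocks 1
      (Matrix.of fun i (_ : Unit) => -xhat i)
      (Matrix.of fun (_ : Unit) j => -xhat j)
      (Matrix.of fun _ _ => xhat ⬝ᵥ xhat))
    (hF : ∀ k, F k = Matrix.fromBlocks (H k)
      (Matrix.of fun i (_ : Unit) => b k i)
      (Matrix.of fun (_ : Unit) j => b k j)
      (Matrix.of fun _ _ => β k))
    (hE : E = Matrix.fromBlocks 0 0 0 1)
    (xs : Fin n → ℝ) (lam : Fin m → ℝ)
    (hfeas : ∀ k, f k xs = 0)
    (hgrad : (xs - xhat) + ∑ k, lam k • ((H k).mulVec xs + b k) = 0)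
    (hpsd : ((1 : Matrix (Fin n) (Fin n) ℝ) + ∑ k, lam k • H k).PosSemidef) :
    IsLeast {v : ℝ | ∃ Y : Matrix (Fin n ⊕ Unit) (Fin n ⊕ Unit) ℝ,
      Y.PosSemidef ∧ (∀ k, Matrix.trace (F k * Y) = 0) ∧
      Matrix.trace (E * Y) = 1 ∧ v = Matrix.trace (G * Y)} (g xs) := by
  set A := (1 : Matrix (Fin n) (Fin n) ℝ) + ∑ k, lam k • H k
  set u : Fin n ⊕ Unit → ℝ := Sum.elim xs 1
  have hG' : G = homogenize 1 (-xhat) (xhat ⬝ᵥ xhat) := hG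
  have hF' : ∀ k, F k = homogenize (H k) (b k) (β k) := hF
  have hE' : E = homogenize 0 0 1 := hE
  have hGu : trace (G * vecMulVec u u) = g xs := by
    rw [trace_mul_vecMulVec, hG', dotProduct_homogenize_one_mulVec, hg]
  have hFu (k) : trace (F k * vecMulVec u u) = 0 := by
    rw [trace_mul_vecMulVec, hF', dotProduct_homogenize_mulVec, ← hf, hfeas]
  have hEu : trace (E * vecMulVec u u) = 1 := by
    rw [trace_mul_vecMulVec, hE', dotProduct_homogenize_mulVec]
    simp
  have hL : G + ∑ k, lam k • F k =
      homogenize A (-xhat + ∑ k, lam k • b k) (xhat ⬝ᵥ xhat + ∑ k, lam k * β k) := by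
    simp only [hG', hF', smul_homogenize, homogenize_sum, homogenize_add, A]
  have hstat : A *ᵥ xs + (-xhat + ∑ k, lam k • b k) = 0 := by
    rw [← hgrad]
    simp only [A, add_mulVec, one_mulVec, sum_mulVec, smul_mulVec, smul_add,
      Finset.sum_add_distrib]
    abel
  have hcert : G + ∑ k, lam k • F k = homogenize A (-(A *ᵥ xs)) (xs ⬝ᵥ A *ᵥ xs) + g xs • E := by
    have hLu : u ⬝ᵥ (G + ∑ k, lam k • F k) *ᵥ u = g xs := by
      simp [← trace_mul_vecMulVec, trace_add_sum_smul_mul, hGu, hFu]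
    rw [hE', ← hLu, hL]
    exact homogenize_of_stationary _ hstat
  refine ⟨⟨vecMulVec u u, by simpa using posSemidef_vecMulVec_self_star u, hFu, hEu, hGu.symm⟩, ?_⟩
  rintro _ ⟨Y, hY, hFY, hEY, rfl⟩
  exact le_trace_mul_of_add_sum_smul_eq (hpsd.homogenize_shift xs) hcert hY hFY hEY

theorem sdp_relaxation_exact_of_certificate
    (n m : ℕ) (xhat : Fin n → ℝ)
    (H : Fin m → Matrix (Fin n) (Fin n) ℝ)
    (b : Fin m → Fin n → ℝ) (β : Fin m → ℝ)
    (hH : ∀ k, (H k).IsSymm)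
    (g : (Fin n → ℝ) → ℝ) (f : Fin m → (Fin n → ℝ) → ℝ)
    (hg : ∀ x, g x = (x - xhat) ⬝ᵥ (x - xhat))
    (hf : ∀ k x, f k x = x ⬝ᵥ (H k).mulVec x + 2 * (b k ⬝ᵥ x) + β k)
    (G : Matrix (Fin n ⊕ Unit) (Fin n ⊕ Unit) ℝ)
    (F : Fin m → Matrix (Fin n ⊕ Unit) (Fin n ⊕ Unit) ℝ)
    (E : Matrix (Fin n ⊕ Unit) (Fin n ⊕ Unit) ℝ)
    (hG : G = Matrix.fromBlocks 1
      (Matrix.of fun i (_ : Unit) => -xhat i)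
      (Matrix.of fun (_ : Unit) j => -xhat j)
      (Matrix.of fun _ _ => xhat ⬝ᵥ xhat))
    (hF : ∀ k, F k = Matrix.fromBlocks (H k)
      (Matrix.of fun i (_ : Unit) => b k i)
      (Matrix.of fun (_ : Unit) j => b k j)
      (Matrix.of fun _ _ => β k))
    (hE : E = Matrix.fromBlocks 0 0 0 1)
    (xs : Fin n → ℝ) (lam : Fin m → ℝ)
    (hfeas : ∀ k, f k xs = 0)
    (hmin : ∀ x : Fin n → ℝ, (∀ k, f k x = 0) → g xs ≤ g x)
    (hgrad : (xs - xhat) + ∑ k, lam k • ((H k).mulVec xs + b k) = 0)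
    (hpsd : ((1 : Matrix (Fin n) (Fin n) ℝ) + ∑ k, lam k • H k).PosSemidef) :
    IsLeast {v : ℝ | ∃ Y : Matrix (Fin n ⊕ Unit) (Fin n ⊕ Unit) ℝ,
      Y.PosSemidef ∧ (∀ k, Matrix.trace (F k * Y) = 0) ∧
      Matrix.trace (E * Y) = 1 ∧ v = Matrix.trace (G * Y)} (g xs) :=
  sdp_relaxation_exact_of_certificate_general n m xhat H b β g f hg hf G F E hG hF hE xs lam hfeas
    hgrad hpsd
end

section
/- Conversely, if the SDP relaxation is exact, i.e. there exist dual-optimal λ_k, ρ with G + ∑ λ_k F_k − ρ E ⪰ 0 and ρ = g(x*) where x* is a constrained minimizer of g over {f_k = 0}, then those λ_k satisfy ∇g(x*) + ∑ λ_k ∇f_k(x*) = 0 and I + ∑ λ_k H_k ⪰ 0. -/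
/-!
The dual matrix `G + ∑ λₖ Fₖ - ρ E` is the homogenization of the Lagrangian
`L(x) = g(x) + ∑ λₖ fₖ(x) - ρ`, whose Hessian is `I + ∑ λₖ Hₖ`: a principal block of a
positive semidefinite matrix, hence positive semidefinite. Feasibility of `x*` and `ρ = g(x*)`
give `L(x*) = 0`, so the quadratic form of the dual matrix vanishes at `(x*, 1)`; a positive
semidefinite matrix kills every vector on which its form vanishes, and the first block of that
product is `∇L(x*) / 2`.
-/

open Matrix

namespace Matrix

variable {ι κ R : Type*}

def quadBlocks (A : Matrix ι ι R) (u : ι → R) (γ : R) : Matrix (ι ⊕ Unit) (ι ⊕ Unit) R :=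
  fromBlocks A (of fun i (_ : Unit) => u i) (of fun (_ : Unit) j => u j) (of fun _ _ => γ)

@[simp]
theorem quadBlocks_submatrix_inl (A : Matrix ι ι R) (u : ι → R) (γ : R) :
    (quadBlocks A u γ).submatrix Sum.inl Sum.inl = A :=
  rfl

theorem PosSemidef.of_quadBlocks [Ring R] [PartialOrder R] [StarRing R] {A : Matrix ι ι R}
    {u : ι → R} {γ : R} (h : (quadBlocks A u γ).PosSemidef) : A.PosSemidef := by
  simpa using h.submatrix Sum.inl

section Quadratic

variable [Fintype ι] [CommRing R]

def quadFun (A : Matrix ι ι R) (u : ι → R) (γ : R) (x : ι → R) : R :=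
  x ⬝ᵥ A *ᵥ x + 2 * (u ⬝ᵥ x) + γ

theorem quadFun_add_sum_smul [Fintype κ] (A : Matrix ι ι R) (u : ι → R) (γ : R)
    (H : κ → Matrix ι ι R) (b : κ → ι → R) (β : κ → R) (lam : κ → R) (x : ι → R) :
    quadFun (A + ∑ k, lam k • H k) (u + ∑ k, lam k • b k) (γ + ∑ k, lam k * β k) x =
      quadFun A u γ x + ∑ k, lam k * quadFun (H k) (b k) (β k) x := by
  simp only [quadFun, add_mulVec, sum_mulVec, smul_mulVec, dotProduct_add, add_dotProduct,
    dotProduct_sum, sum_dotProduct, dotProduct_smul, smul_dotProduct, smul_eq_mul, mul_add,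
    Finset.sum_add_distrib, mul_left_comm _ (2 : R), ← Finset.mul_sum]
  ring

theorem quadBlocks_mulVec_sumElim_one (A : Matrix ι ι R) (u : ι → R) (γ : R) (x : ι → R) :
    quadBlocks A u γ *ᵥ Sum.elim x 1 = Sum.elim (A *ᵥ x + u) fun _ => u ⬝ᵥ x + γ := by
  rw [quadBlocks, fromBlocks_mulVec]
  congr 1 <;> ext <;> simp [mulVec, dotProduct]

theorem sumElim_one_dotProduct_quadBlocks_mulVec (A : Matrix ι ι R) (u : ι → R) (γ : R)
    (x : ι → R) :
    Sum.elim x 1 ⬝ᵥ quadBlocks A u γ *ᵥ Sum.elim x 1 = quadFun A u γ x := by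
  rw [quadBlocks_mulVec_sumElim_one, sumElim_dotProduct_sumElim, dotProduct_add,
    dotProduct_comm x u, quadFun]
  simp only [dotProduct, Finset.univ_unique, Pi.one_apply, one_mul, Finset.sum_singleton]
  ring

end Quadratic

theorem PosSemidef.mulVec_add_eq_zero_of_quadBlocks [Fintype ι] {A : Matrix ι ι ℝ} {u : ι → ℝ}
    {γ : ℝ} (h : (quadBlocks A u γ).PosSemidef) {x : ι → ℝ} (hx : quadFun A u γ x = 0) :
    A *ᵥ x + u = 0 := by
  have hker := (h.dotProduct_mulVec_zero_iff (Sum.elim x 1)).1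
    (by rw [star_trivial, sumElim_one_dotProduct_quadBlocks_mulVec, hx])
  rw [quadBlocks_mulVec_sumElim_one] at hker
  exact congrArg (· ∘ Sum.inl) hker

end Matrix

theorem certificate_of_sdp_exact_general
    (n m : ℕ) (xhat : Fin n → ℝ)
    (H : Fin m → Matrix (Fin n) (Fin n) ℝ)
    (b : Fin m → Fin n → ℝ) (β : Fin m → ℝ)
    (g : (Fin n → ℝ) → ℝ) (f : Fin m → (Fin n → ℝ) → ℝ)
    (hg : ∀ x, g x = (x - xhat) ⬝ᵥ (x - xhat))
    (hf : ∀ k x, f k x = x ⬝ᵥ (H k).mulVec x + 2 * (b k ⬝ᵥ x) + β k)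
    (G : Matrix (Fin n ⊕ Unit) (Fin n ⊕ Unit) ℝ)
    (F : Fin m → Matrix (Fin n ⊕ Unit) (Fin n ⊕ Unit) ℝ)
    (E : Matrix (Fin n ⊕ Unit) (Fin n ⊕ Unit) ℝ)
    (hG : G = Matrix.fromBlocks 1
      (Matrix.of fun i (_ : Unit) => -xhat i)
      (Matrix.of fun (_ : Unit) j => -xhat j)
      (Matrix.of fun _ _ => xhat ⬝ᵥ xhat))
    (hF : ∀ k, F k = Matrix.fromBlocks (H k)
      (Matrix.of fun i (_ : Unit) => b k i)
      (Matrix.of fun (_ : Unit) j => b k j)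
      (Matrix.of fun _ _ => β k))
    (hE : E = Matrix.fromBlocks 0 0 0 1)
    (xs : Fin n → ℝ) (lam : Fin m → ℝ) (ρ : ℝ)
    (hfeas : ∀ k, f k xs = 0)
    (hρ : ρ = g xs)
    (hdual : (G + ∑ k, lam k • F k - ρ • E).PosSemidef) :
    (xs - xhat) + ∑ k, lam k • ((H k).mulVec xs + b k) = 0 ∧
    ((1 : Matrix (Fin n) (Fin n) ℝ) + ∑ k, lam k • H k).PosSemidef := by
  have hL : G + ∑ k, lam k • F k - ρ • E = quadBlocks (1 + ∑ k, lam k • H k)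
      (-xhat + ∑ k, lam k • b k) (xhat ⬝ᵥ xhat - ρ + ∑ k, lam k * β k) := by
    ext (i | i) (j | j) <;> simp [hG, hF, hE, quadBlocks, Matrix.sum_apply, Finset.sum_apply,
      add_sub_right_comm]
  rw [hL] at hdual
  refine ⟨?_, hdual.of_quadBlocks⟩
  have hLxs : quadFun (1 + ∑ k, lam k • H k) (-xhat + ∑ k, lam k • b k)
      (xhat ⬝ᵥ xhat - ρ + ∑ k, lam k * β k) xs = 0 := by
    rw [quadFun_add_sum_smul]
    simp only [quadFun, ← hf, hfeas, mul_zero, Finset.sum_const_zero, add_zero, hρ, hg,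
      one_mulVec, dotProduct_sub, sub_dotProduct, neg_dotProduct, dotProduct_comm xhat xs]
    ring
  rw [← hdual.mulVec_add_eq_zero_of_quadBlocks hLxs]
  simp only [add_mulVec, one_mulVec, sum_mulVec, smul_mulVec, smul_add, Finset.sum_add_distrib]
  abel

theorem certificate_of_sdp_exact
    (n m : ℕ) (xhat : Fin n → ℝ)
    (H : Fin m → Matrix (Fin n) (Fin n) ℝ)
    (b : Fin m → Fin n → ℝ) (β : Fin m → ℝ)
    (hH : ∀ k, (H k).IsSymm)
    (g : (Fin n → ℝ) → ℝ) (f : Fin m → (Fin n → ℝ) → ℝ)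
    (hg : ∀ x, g x = (x - xhat) ⬝ᵥ (x - xhat))
    (hf : ∀ k x, f k x = x ⬝ᵥ (H k).mulVec x + 2 * (b k ⬝ᵥ x) + β k)
    (G : Matrix (Fin n ⊕ Unit) (Fin n ⊕ Unit) ℝ)
    (F : Fin m → Matrix (Fin n ⊕ Unit) (Fin n ⊕ Unit) ℝ)
    (E : Matrix (Fin n ⊕ Unit) (Fin n ⊕ Unit) ℝ)
    (hG : G = Matrix.fromBlocks 1
      (Matrix.of fun i (_ : Unit) => -xhat i)
      (Matrix.of fun (_ : Unit) j => -xhat j)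
      (Matrix.of fun _ _ => xhat ⬝ᵥ xhat))
    (hF : ∀ k, F k = Matrix.fromBlocks (H k)
      (Matrix.of fun i (_ : Unit) => b k i)
      (Matrix.of fun (_ : Unit) j => b k j)
      (Matrix.of fun _ _ => β k))
    (hE : E = Matrix.fromBlocks 0 0 0 1)
    (xs : Fin n → ℝ) (lam : Fin m → ℝ) (ρ : ℝ)
    (hfeas : ∀ k, f k xs = 0)
    (hmin : ∀ x : Fin n → ℝ, (∀ k, f k x = 0) → g xs ≤ g x)
    (hρ : ρ = g xs)
    (hdual : (G + ∑ k, lam k • F k - ρ • E).PosSemidef) :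
    (xs - xhat) + ∑ k, lam k • ((H k).mulVec xs + b k) = 0 ∧
    ((1 : Matrix (Fin n) (Fin n) ℝ) + ∑ k, lam k • H k).PosSemidef :=
  certificate_of_sdp_exact_general n m xhat H b β g f hg hf G F E hG hF hE xs lam ρ hfeas hρ hdual
end

section
/- Let Y* be optimal for the primal SDP (min ⟨G,Y⟩ s.t. ⟨F_k,Y⟩ = 0, ⟨E,Y⟩ = 1, Y ⪰ 0) and (λ*, ρ*) optimal for its dual, satisfying complementary slackness ⟨G + ∑ λ*_k F_k − ρ* E, Y*⟩ = 0. If the top-left n×n block I + ∑ λ*_k H_k of the dual slack matrix is positive definite, then rank(Y*) = 1. -/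
/-!
Complementary slackness between the positive semidefinite matrices `S` (the dual slack) and `Y`
forces `S * Y = 0`, so the range of `Y` lies in the kernel of `S`. A kernel vector of `S` whose last
coordinate vanishes is killed by the positive definite top-left block, hence is zero; so `ker S`
has dimension at most one. Finally `trace (E * Y) = 1` rules out `Y = 0`.
-/

open Matrix

namespace Matrix

open scoped ComplexOrder MatrixOrder Matrix.Norms.L2Operator in
/-- Writing `A = Cᴴ C` and `B = Dᴴ D`, `trace (A * B)` is the squared Frobenius norm of `C * Dᴴ`. -/
theorem PosSemidef.mul_eq_zero_of_trace_mul_eq_zero {𝕜 n : Type*} [RCLike 𝕜] [Fintype n]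
    {A B : Matrix n n 𝕜} (hA : A.PosSemidef) (hB : B.PosSemidef)
    (h : (A * B).trace = 0) : A * B = 0 := by
  classical
  obtain ⟨C, rfl⟩ := CStarAlgebra.nonneg_iff_eq_star_mul_self.mp hA.nonneg
  obtain ⟨D, rfl⟩ := CStarAlgebra.nonneg_iff_eq_star_mul_self.mp hB.nonneg
  simp only [star_eq_conjTranspose] at h ⊢
  have hCD : C * Dᴴ = 0 := by
    rw [← trace_conjTranspose_mul_self_eq_zero_iff, ← h, conjTranspose_mul,
      conjTranspose_conjTranspose, Matrix.mul_assoc, trace_mul_comm]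
    simp only [Matrix.mul_assoc]
  rw [Matrix.mul_assoc, ← Matrix.mul_assoc C, hCD, Matrix.zero_mul, Matrix.mul_zero]

variable {K l m n o : Type*} [Field K]

theorem rank_eq_zero_iff [Fintype n] {A : Matrix m n K} : A.rank = 0 ↔ A = 0 := by
  classical
  rw [rank, Submodule.finrank_eq_zero, LinearMap.range_eq_bot, ← toLin'_apply',
    LinearEquiv.map_eq_zero_iff]

theorem rank_le_finrank_ker_of_mul_eq_zero [Fintype m] [Fintype n] {A : Matrix l m K}
    {B : Matrix m n K} (h : A * B = 0) : B.rank ≤ Module.finrank K (LinearMap.ker A.mulVecLin) := by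
  refine Submodule.finrank_mono ?_
  rintro _ ⟨x, rfl⟩
  simp [mulVec_mulVec, h]

theorem finrank_ker_mulVecLin_le_card_of_injective_toBlocks₁₁ [Fintype n] [Fintype o]
    {S : Matrix (l ⊕ m) (n ⊕ o) K} (hS : Function.Injective S.toBlocks₁₁.mulVec) :
    Module.finrank K (LinearMap.ker S.mulVecLin) ≤ Fintype.card o := by
  let restrict : LinearMap.ker S.mulVecLin →ₗ[K] o → K :=
    (LinearMap.funLeft K K Sum.inr).comp (LinearMap.ker S.mulVecLin).subtype
  have hinj : Function.Injective restrict := by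
    rw [← LinearMap.ker_eq_bot, LinearMap.ker_eq_bot']
    rintro ⟨v, hv⟩ hvr
    have hvr : ∀ j, v (Sum.inr j) = 0 := congr_fun hvr
    have hSv : S.toBlocks₁₁ *ᵥ (v ∘ Sum.inl) = 0 := by
      ext i
      have hi := congr_fun (LinearMap.mem_ker.mp hv) (Sum.inl i)
      simpa [mulVec, dotProduct, Fintype.sum_sum_type, toBlocks₁₁, hvr] using hi
    have hvl : v ∘ Sum.inl = 0 := hS (hSv.trans (mulVec_zero _).symm)
    ext (i | i)
    exacts [congr_fun hvl i, hvr i]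
  simpa using LinearMap.finrank_le_finrank_of_injective hinj

end Matrix

theorem rank_one_of_strict_dual_block_general
    (n m : ℕ) (xhat : Fin n → ℝ)
    (H : Fin m → Matrix (Fin n) (Fin n) ℝ)
    (b : Fin m → Fin n → ℝ) (β : Fin m → ℝ)
    (G : Matrix (Fin n ⊕ Unit) (Fin n ⊕ Unit) ℝ)
    (F : Fin m → Matrix (Fin n ⊕ Unit) (Fin n ⊕ Unit) ℝ)
    (E : Matrix (Fin n ⊕ Unit) (Fin n ⊕ Unit) ℝ)
    (hG : G = Matrix.fromBlocks 1
      (Matrix.of fun i (_ : Unit) => -xhat i)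
      (Matrix.of fun (_ : Unit) j => -xhat j)
      (Matrix.of fun _ _ => xhat ⬝ᵥ xhat))
    (hF : ∀ k, F k = Matrix.fromBlocks (H k)
      (Matrix.of fun i (_ : Unit) => b k i)
      (Matrix.of fun (_ : Unit) j => b k j)
      (Matrix.of fun _ _ => β k))
    (hE : E = Matrix.fromBlocks 0 0 0 1)
    (Y : Matrix (Fin n ⊕ Unit) (Fin n ⊕ Unit) ℝ)
    (lam : Fin m → ℝ) (ρ : ℝ)
    (hY : Y.PosSemidef)
    (hYE : Matrix.trace (E * Y) = 1)
    (hdual : (G + ∑ k, lam k • F k - ρ • E).PosSemidef)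
    (hcs : Matrix.trace ((G + ∑ k, lam k • F k - ρ • E) * Y) = 0)
    (hpd : ((1 : Matrix (Fin n) (Fin n) ℝ) + ∑ k, lam k • H k).PosDef) :
    Y.rank = 1 := by
  set S := G + ∑ k, lam k • F k - ρ • E
  have hblock : S.toBlocks₁₁ = 1 + ∑ k, lam k • H k := by
    ext i j
    simp [S, hG, hF, hE, toBlocks₁₁, Matrix.sum_apply]
  have hker : Module.finrank ℝ (LinearMap.ker S.mulVecLin) ≤ 1 := by
    refine (finrank_ker_mulVecLin_le_card_of_injective_toBlocks₁₁ ?_).trans_eq Fintype.card_unit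
    exact hblock ▸ mulVec_injective_iff_isUnit.mpr hpd.isUnit
  have hrank_le : Y.rank ≤ 1 :=
    (rank_le_finrank_ker_of_mul_eq_zero (hdual.mul_eq_zero_of_trace_mul_eq_zero hY hcs)).trans hker
  have hrank_ne : Y.rank ≠ 0 := by
    rw [Ne, Matrix.rank_eq_zero_iff]
    rintro rfl
    simp at hYE
  omega

theorem rank_one_of_strict_dual_block
    (n m : ℕ) (xhat : Fin n → ℝ)
    (H : Fin m → Matrix (Fin n) (Fin n) ℝ)
    (b : Fin m → Fin n → ℝ) (β : Fin m → ℝ)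
    (hH : ∀ k, (H k).IsSymm)
    (G : Matrix (Fin n ⊕ Unit) (Fin n ⊕ Unit) ℝ)
    (F : Fin m → Matrix (Fin n ⊕ Unit) (Fin n ⊕ Unit) ℝ)
    (E : Matrix (Fin n ⊕ Unit) (Fin n ⊕ Unit) ℝ)
    (hG : G = Matrix.fromBlocks 1
      (Matrix.of fun i (_ : Unit) => -xhat i)
      (Matrix.of fun (_ : Unit) j => -xhat j)
      (Matrix.of fun _ _ => xhat ⬝ᵥ xhat))
    (hF : ∀ k, F k = Matrix.fromBlocks (H k)
      (Matrix.of fun i (_ : Unit) => b k i)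
      (Matrix.of fun (_ : Unit) j => b k j)
      (Matrix.of fun _ _ => β k))
    (hE : E = Matrix.fromBlocks 0 0 0 1)
    (Y : Matrix (Fin n ⊕ Unit) (Fin n ⊕ Unit) ℝ)
    (lam : Fin m → ℝ) (ρ : ℝ)
    (hY : Y.PosSemidef)
    (hYfeas : ∀ k, Matrix.trace (F k * Y) = 0)
    (hYE : Matrix.trace (E * Y) = 1)
    (hdual : (G + ∑ k, lam k • F k - ρ • E).PosSemidef)
    (hcs : Matrix.trace ((G + ∑ k, lam k • F k - ρ • E) * Y) = 0)
    (hpd : ((1 : Matrix (Fin n) (Fin n) ℝ) + ∑ k, lam k • H k).PosDef) :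
    Y.rank = 1 :=
  rank_one_of_strict_dual_block_general n m xhat H b β G F E hG hF hE Y lam ρ hY hYE hdual hcs hpd
end
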